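/- Let X be a smooth vector field on ℝ^{1+n} whose first (time) component is identically 1, let R be a Jacobi multiplier for X, and let Y be a smooth vector field with first (time) component Y⁰ satisfying [Y,X] = λоX for some smooth function λ. Then the function I = div Y + Y(log R) − X(Y⁰) is a first integral of X, i.e. X(div Y + Y(log R) − X(Y⁰)) = 0 identically. -/

import Mathlib

/-- The divergence of a vector field on ℝ^m: the trace of its Fréchet derivative. -/
noncomputable def vdiv {m : ℕ} (X : (Fin m → ℝ) → (Fin m → ℝ)) (x : Fin m → ℝ) : ℝ :=
  LinearMap.trace ℝ (Fin m → ℝ) (fderiv ℝ X x : (Fin m → ℝ) →ₗ[ℝ] (Fin m → ℝ))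

/-- The Lie bracket of vector fields: [X,Y](x) = DY(x)(X(x)) − DX(x)(Y(x)). -/
noncomputable def lieBracket {m : ℕ} (X Y : (Fin m → ℝ) → (Fin m → ℝ))
    (x : Fin m → ℝ) : Fin m → ℝ :=
  fderiv ℝ Y x (X x) - fderiv ℝ X x (Y x)

lemma vdiv_eq {m : ℕ} (F : (Fin m → ℝ) → (Fin m → ℝ)) (x : Fin m → ℝ) :
    vdiv F x = ∑ i, fderiv ℝ F x (Pi.single i 1) i := by
  rw [vdiv, LinearMap.trace_eq_matrix_trace ℝ (Pi.basisFun ℝ (Fin m)), Matrix.trace]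
  refine Finset.sum_congr rfl fun i _ => ?_
  rw [Matrix.diag]
  rw [LinearMap.toMatrix_eq_toMatrix', LinearMap.toMatrix'_apply]
  have h : (fun j' => if j' = i then 1 else 0) = (Pi.single i 1 : Fin m → ℝ) := by
    funext j; simp [Pi.single_apply]
  rfl

lemma clm_coord {m : ℕ} {V : Type*} [NormedAddCommGroup V] [NormedSpace ℝ V]
    (A : (Fin m → ℝ) →L[ℝ] V) (u : Fin m → ℝ) :
    A u = ∑ j, u j • A (Pi.single j 1) := by
  have hu : u = ∑ j, u j • (Pi.single j 1 : Fin m → ℝ) := by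
    funext k
    simp [Finset.sum_apply, Pi.single_apply]
  calc A u = A (∑ j, u j • (Pi.single j 1 : Fin m → ℝ)) := by rw [← hu]
    _ = ∑ j, u j • A (Pi.single j 1) := by rw [map_sum]; simp

lemma trace_comm {m : ℕ} (A B : (Fin m → ℝ) →L[ℝ] (Fin m → ℝ)) :
    ∑ i, A (B (Pi.single i 1)) i = ∑ i, B (A (Pi.single i 1)) i := by
  calc ∑ i, A (B (Pi.single i 1)) i
      = ∑ i, ∑ j, B (Pi.single i 1) j * A (Pi.single j 1) i := by
        refine Finset.sum_congr rfl fun i _ => ?_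
        rw [clm_coord A (B (Pi.single i 1))]
        simp [Finset.sum_apply]
    _ = ∑ j, ∑ i, B (Pi.single i 1) j * A (Pi.single j 1) i := Finset.sum_comm
    _ = ∑ j, B (A (Pi.single j 1)) j := by
        refine Finset.sum_congr rfl fun j _ => ?_
        rw [clm_coord B (A (Pi.single j 1))]
        simp [Finset.sum_apply, mul_comm]

lemma second_symm {m : ℕ} {V : Type*} [NormedAddCommGroup V] [NormedSpace ℝ V]
    {F : (Fin m → ℝ) → V} (hF : ContDiff ℝ (⊤ : ℕ∞) F) (z v w : Fin m → ℝ) :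
    fderiv ℝ (fderiv ℝ F) z v w = fderiv ℝ (fderiv ℝ F) z w v :=
  second_derivative_symmetric (fun y => (hF.differentiable (by simp) y).hasFDerivAt)
    (((hF.fderiv_right (m := (⊤ : ℕ∞)) (by simp)).differentiable (by simp) z).hasFDerivAt) v w

lemma fderiv_coord {m : ℕ} {F : (Fin m → ℝ) → (Fin m → ℝ)} {z : Fin m → ℝ}
    (hF : DifferentiableAt ℝ F z) (i : Fin m) :
    fderiv ℝ (fun w => F w i) z = (ContinuousLinearMap.proj i).comp (fderiv ℝ F z) := by
  have h := (((ContinuousLinearMap.proj (R := ℝ) (φ := fun _ : Fin m => ℝ) i).hasFDerivAt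
    (x := F z)).comp z hF.hasFDerivAt).fderiv
  exact h

lemma hasFDerivAt_vdiv {m : ℕ} {F : (Fin m → ℝ) → (Fin m → ℝ)} (hF : ContDiff ℝ (⊤ : ℕ∞) F)
    (z : Fin m → ℝ) :
    HasFDerivAt (vdiv F)
      (∑ i, (((ContinuousLinearMap.proj i).comp
          (ContinuousLinearMap.apply ℝ (Fin m → ℝ) (Pi.single i 1)))).comp
        (fderiv ℝ (fderiv ℝ F) z)) z := by
  have h2 : HasFDerivAt (fderiv ℝ F) (fderiv ℝ (fderiv ℝ F) z) z :=
    (((hF.fderiv_right (m := (⊤ : ℕ∞)) (by simp)).differentiable (by simp)) z).hasFDerivAt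
  have h3 : ∀ i : Fin m,
      HasFDerivAt (fun w => fderiv ℝ F w (Pi.single i 1) i)
        ((((ContinuousLinearMap.proj i).comp
            (ContinuousLinearMap.apply ℝ (Fin m → ℝ) (Pi.single i 1)))).comp
          (fderiv ℝ (fderiv ℝ F) z)) z := by
    intro i
    have h := (((ContinuousLinearMap.proj (R := ℝ) (φ := fun _ : Fin m => ℝ) i).comp
        (ContinuousLinearMap.apply ℝ (Fin m → ℝ) (Pi.single i 1))).hasFDerivAt).comp z h2
    exact h
  have h4 := HasFDerivAt.fun_sum (fun i (_ : i ∈ Finset.univ) => h3 i)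
  have he : vdiv F = fun w => ∑ i, fderiv ℝ F w (Pi.single i 1) i := funext fun w => vdiv_eq F w
  rw [he]
  exact h4

/-- Let `X` be a smooth vector field on ℝ^{1+n} (coordinate 0 being time) with
time component identically 1, let `R` be a Jacobi multiplier for `X` (smooth, positive, with
`X(R) + R·div X = 0`), and let `Y` be a smooth vector field with time component `Y⁰`
satisfying `[Y,X] = λ·X` for some smooth `λ`. Then `I = div Y + Y(log R) − X(Y⁰)` is a first
integral of `X`. -/
theorem stmt_7 {n : ℕ} (X Y : (Fin (n + 1) → ℝ) → (Fin (n + 1) → ℝ))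
    (R : (Fin (n + 1) → ℝ) → ℝ) (lam : (Fin (n + 1) → ℝ) → ℝ)
    (hX : ContDiff ℝ (⊤ : ℕ∞) X) (hY : ContDiff ℝ (⊤ : ℕ∞) Y) (hR : ContDiff ℝ (⊤ : ℕ∞) R) (hlam : ContDiff ℝ (⊤ : ℕ∞) lam)
    (hXtime : ∀ z, X z 0 = 1)
    (hRpos : ∀ z, 0 < R z)
    (hJacobi : ∀ z, fderiv ℝ R z (X z) + R z * vdiv X z = 0)
    (hnorm : ∀ z, lieBracket Y X z = lam z • X z) :
    ∀ z : Fin (n + 1) → ℝ,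
      fderiv ℝ (fun w => vdiv Y w + fderiv ℝ (fun u => Real.log (R u)) w (Y w)
        - fderiv ℝ (fun u => Y u 0) w (X w)) z (X z) = 0 := by
  intro z
  have hXd : Differentiable ℝ X := hX.differentiable (by simp)
  have hYd : Differentiable ℝ Y := hY.differentiable (by simp)
  have hRd : Differentiable ℝ R := hR.differentiable (by simp)
  have hld : Differentiable ℝ lam := hlam.differentiable (by simp)
  have hDX : Differentiable ℝ (fderiv ℝ X) := (hX.fderiv_right (m := (⊤ : ℕ∞)) (by simp)).differentiable (by simp)
  have hDY : Differentiable ℝ (fderiv ℝ Y) := (hY.fderiv_right (m := (⊤ : ℕ∞)) (by simp)).differentiable (by simp)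
  have hRne : ∀ u, R u ≠ 0 := fun u => (hRpos u).ne'
  set f : (Fin (n + 1) → ℝ) → ℝ := fun u => Real.log (R u) with hfdef
  have hf : ContDiff ℝ (⊤ : ℕ∞) f := hR.log hRne
  have hfd : Differentiable ℝ f := hf.differentiable (by simp)
  have hDf : Differentiable ℝ (fderiv ℝ f) := (hf.fderiv_right (m := (⊤ : ℕ∞)) (by simp)).differentiable (by simp)
  -- X(log R) = - div X
  have E3 : (fun w => fderiv ℝ f w (X w)) = (fun w => -(vdiv X w)) := by
    funext w
    have hl : fderiv ℝ f w = (R w)⁻¹ • fderiv ℝ R w := (((hRd w).hasFDerivAt).log (hRne w)).fderiv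
    have hj := hJacobi w
    rw [hl]
    simp only [ContinuousLinearMap.smul_apply, smul_eq_mul]
    have hx : fderiv ℝ R w (X w) = -(R w * vdiv X w) := by linarith
    rw [hx]
    field_simp [hRne w]
  -- X(Y⁰) = - lam
  have hg : ∀ w, fderiv ℝ (fun u => Y u 0) w (X w) = -(lam w) := by
    intro w
    have hb := congrFun (hnorm w) 0
    simp only [lieBracket, Pi.sub_apply, Pi.smul_apply, smul_eq_mul, hXtime w, mul_one] at hb
    have h1 : fderiv ℝ X w (Y w) 0 = 0 := by
      have hconst : fderiv ℝ (fun u => X u 0) w = 0 := by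
        have hc : (fun u => X u 0) = fun _ : Fin (n + 1) → ℝ => (1 : ℝ) := funext hXtime
        rw [hc]
        exact fderiv_const_apply 1
      have hcd := fderiv_coord (hXd w) 0
      calc fderiv ℝ X w (Y w) 0
          = fderiv ℝ (fun u => X u 0) w (Y w) := by rw [hcd]; rfl
        _ = 0 := by rw [hconst]; rfl
    have h2 : fderiv ℝ Y w (X w) 0 = fderiv ℝ (fun u => Y u 0) w (X w) := by
      rw [fderiv_coord (hYd w) 0]; rfl
    rw [h2, h1] at hb
    linarith
  -- rewrite target function using hg
  have hWfun : (fun w => vdiv Y w + fderiv ℝ f w (Y w) - fderiv ℝ (fun u => Y u 0) w (X w))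
      = fun w => vdiv Y w + fderiv ℝ f w (Y w) + lam w := by
    funext w
    rw [hg w]
    ring
  rw [hWfun]
  -- derivative of the target function at z
  have hP1 := hasFDerivAt_vdiv hY z
  have hP2 : HasFDerivAt (fun w => fderiv ℝ f w (Y w))
      ((fderiv ℝ f z).comp (fderiv ℝ Y z) + (fderiv ℝ (fderiv ℝ f) z).flip (Y z)) z :=
    (hDf z).hasFDerivAt.clm_apply (hYd z).hasFDerivAt
  have hP3 := (hld z).hasFDerivAt
  have hsum := (hP1.fun_add hP2).fun_add hP3
  rw [hsum.fderiv]
  simp only [ContinuousLinearMap.add_apply, ContinuousLinearMap.coe_sum', Finset.sum_apply,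
    ContinuousLinearMap.comp_apply, ContinuousLinearMap.flip_apply,
    ContinuousLinearMap.proj_apply, ContinuousLinearMap.apply_apply]
  -- Q identity: derivative of E3 evaluated at Y z
  have hQ1 : HasFDerivAt (fun w => fderiv ℝ f w (X w))
      ((fderiv ℝ f z).comp (fderiv ℝ X z) + (fderiv ℝ (fderiv ℝ f) z).flip (X z)) z :=
    (hDf z).hasFDerivAt.clm_apply (hXd z).hasFDerivAt
  have hQ2 := (hasFDerivAt_vdiv hX z).fun_neg
  have hQclm : (fderiv ℝ f z).comp (fderiv ℝ X z) + (fderiv ℝ (fderiv ℝ f) z).flip (X z)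
      = -(∑ i, (((ContinuousLinearMap.proj i).comp
          (ContinuousLinearMap.apply ℝ (Fin (n + 1) → ℝ) (Pi.single i 1)))).comp
        (fderiv ℝ (fderiv ℝ X) z)) := by
    rw [← hQ1.fderiv, ← hQ2.fderiv, E3]
  have hQ : fderiv ℝ f z (fderiv ℝ X z (Y z)) + fderiv ℝ (fderiv ℝ f) z (Y z) (X z)
      = -(∑ i, fderiv ℝ (fderiv ℝ X) z (Y z) (Pi.single i 1) i) := by
    have h := congrFun (congrArg DFunLike.coe hQclm) (Y z)
    simpa only [ContinuousLinearMap.add_apply, ContinuousLinearMap.comp_apply,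
      ContinuousLinearMap.flip_apply, ContinuousLinearMap.neg_apply,
      ContinuousLinearMap.coe_sum', Finset.sum_apply,
      ContinuousLinearMap.proj_apply, ContinuousLinearMap.apply_apply] using h
  -- differentiate the bracket relation
  have hBfun : (fun w => fderiv ℝ X w (Y w)) = (fun w => fderiv ℝ Y w (X w) + lam w • X w) := by
    funext w
    have hb := hnorm w
    rw [lieBracket] at hb
    exact eq_add_of_sub_eq' hb
  have hL : HasFDerivAt (fun w => fderiv ℝ X w (Y w))
      ((fderiv ℝ X z).comp (fderiv ℝ Y z) + (fderiv ℝ (fderiv ℝ X) z).flip (Y z)) z :=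
    (hDX z).hasFDerivAt.clm_apply (hYd z).hasFDerivAt
  have hRHS : HasFDerivAt (fun w => fderiv ℝ Y w (X w) + lam w • X w)
      (((fderiv ℝ Y z).comp (fderiv ℝ X z) + (fderiv ℝ (fderiv ℝ Y) z).flip (X z))
        + (lam z • fderiv ℝ X z + (fderiv ℝ lam z).smulRight (X z))) z :=
    ((hDY z).hasFDerivAt.clm_apply (hXd z).hasFDerivAt).add
      ((hld z).hasFDerivAt.smul (hXd z).hasFDerivAt)
  have hG1clm : ((fderiv ℝ X z).comp (fderiv ℝ Y z) + (fderiv ℝ (fderiv ℝ X) z).flip (Y z))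
      = (((fderiv ℝ Y z).comp (fderiv ℝ X z) + (fderiv ℝ (fderiv ℝ Y) z).flip (X z))
        + (lam z • fderiv ℝ X z + (fderiv ℝ lam z).smulRight (X z))) := by
    rw [← hL.fderiv, ← hRHS.fderiv, hBfun]
  have hG1 : ∀ i : Fin (n + 1),
      fderiv ℝ X z (fderiv ℝ Y z (Pi.single i 1)) i
        + fderiv ℝ (fderiv ℝ X) z (Pi.single i 1) (Y z) i
      = fderiv ℝ Y z (fderiv ℝ X z (Pi.single i 1)) i
        + fderiv ℝ (fderiv ℝ Y) z (Pi.single i 1) (X z) i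
        + (lam z * fderiv ℝ X z (Pi.single i 1) i
          + fderiv ℝ lam z (Pi.single i 1) * X z i) := by
    intro i
    have h := congrFun (congrFun (congrArg DFunLike.coe hG1clm) (Pi.single i 1)) i
    simpa only [ContinuousLinearMap.add_apply, ContinuousLinearMap.comp_apply,
      ContinuousLinearMap.flip_apply, ContinuousLinearMap.smul_apply,
      ContinuousLinearMap.smulRight_apply, Pi.add_apply, Pi.smul_apply, smul_eq_mul] using h
  have hS : ∑ i, (fderiv ℝ X z (fderiv ℝ Y z (Pi.single i 1)) i
        + fderiv ℝ (fderiv ℝ X) z (Pi.single i 1) (Y z) i)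
      = ∑ i, (fderiv ℝ Y z (fderiv ℝ X z (Pi.single i 1)) i
        + fderiv ℝ (fderiv ℝ Y) z (Pi.single i 1) (X z) i
        + (lam z * fderiv ℝ X z (Pi.single i 1) i
          + fderiv ℝ lam z (Pi.single i 1) * X z i)) :=
    Finset.sum_congr rfl fun i _ => hG1 i
  simp only [Finset.sum_add_distrib, ← Finset.mul_sum] at hS
  have S1eq := trace_comm (fderiv ℝ X z) (fderiv ℝ Y z)
  have S2eq : ∑ i, fderiv ℝ (fderiv ℝ X) z (Pi.single i 1) (Y z) i
      = ∑ i, fderiv ℝ (fderiv ℝ X) z (Y z) (Pi.single i 1) i :=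
    Finset.sum_congr rfl fun i _ => congrFun (second_symm hX z (Pi.single i 1) (Y z)) i
  have S4eq : ∑ i, fderiv ℝ (fderiv ℝ Y) z (Pi.single i 1) (X z) i
      = ∑ i, fderiv ℝ (fderiv ℝ Y) z (X z) (Pi.single i 1) i :=
    Finset.sum_congr rfl fun i _ => congrFun (second_symm hY z (Pi.single i 1) (X z)) i
  have Sa : ∑ i, fderiv ℝ X z (Pi.single i 1) i = vdiv X z := (vdiv_eq X z).symm
  have Sl : ∑ i, fderiv ℝ lam z (Pi.single i 1) * X z i = fderiv ℝ lam z (X z) := by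
    rw [clm_coord (fderiv ℝ lam z) (X z)]
    simp [mul_comm]
  rw [S1eq, S2eq, S4eq, Sa, Sl] at hS
  -- scalar commutator identity for f
  have hE3z : fderiv ℝ f z (X z) = -(vdiv X z) := congrFun E3 z
  have hnf : fderiv ℝ f z (fderiv ℝ X z (Y z)) - fderiv ℝ f z (fderiv ℝ Y z (X z))
      = lam z * -(vdiv X z) := by
    have hb := hnorm z
    rw [lieBracket] at hb
    have h := congrArg (fderiv ℝ f z) hb
    rw [map_sub, map_smul, smul_eq_mul, hE3z] at h
    exact h
  have hsymf : fderiv ℝ (fderiv ℝ f) z (X z) (Y z) = fderiv ℝ (fderiv ℝ f) z (Y z) (X z) :=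
    second_symm hf z (X z) (Y z)
  have hnf' : fderiv ℝ f z (fderiv ℝ X z (Y z)) - fderiv ℝ f z (fderiv ℝ Y z (X z))
      = -(lam z * vdiv X z) := by linarith [hnf, mul_neg (lam z) (vdiv X z)]
  linarith [hS, hQ, hnf', hsymf]
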